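/- Suppose Ψ satisfies Assumption 1. Let (μ_j) be a sequence of positive reals with μ_j → 0 and (v_j) a sequence in ℝ^{n−1} with v_j → 0, and suppose the points w(μ_j, v_j) converge to some w* ∈ ℝ^n. Then w* is an optimal solution of the design problem: w* ∈ Ω, Range(K) ⊆ Range(M(w*)), and Φ̂(M(w*)) = f*. -/

import Mathlib

open Matrix Filter Topology

noncomputable section

attribute [local instance] Matrix.normedAddCommGroup Matrix.normedSpace

/-- Assumption 1: `Ψ` is convex, decreasing, twice continuously differentiable and bounded
below on the set of `k × k` real symmetric positive definite matrices, and `Ψ (X j) → ∞`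
whenever `(X j)` is a bounded sequence of positive definite matrices whose smallest
eigenvalues tend to `0`.  (Over `ℝ`, `Matrix.PosDef` includes symmetry.) -/
structure Assumption1 (k : ℕ) (Ψ : Matrix (Fin k) (Fin k) ℝ → ℝ) : Prop where
  convex : ∀ A B : Matrix (Fin k) (Fin k) ℝ, A.PosDef → B.PosDef →
    ∀ t : ℝ, 0 ≤ t → t ≤ 1 → Ψ (t • A + (1 - t) • B) ≤ t * Ψ A + (1 - t) * Ψ B
  decreasing : ∀ A B : Matrix (Fin k) (Fin k) ℝ, A.IsHermitian → B.PosDef →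
    (A - B).PosSemidef → Ψ A ≤ Ψ B
  smooth : ContDiffOn ℝ 2 Ψ {U : Matrix (Fin k) (Fin k) ℝ | U.PosDef}
  bddBelow : ∃ c : ℝ, ∀ U : Matrix (Fin k) (Fin k) ℝ, U.PosDef → c ≤ Ψ U
  blowup : ∀ (X : ℕ → Matrix (Fin k) (Fin k) ℝ) (hp : ∀ j, (X j).PosDef),
    (∃ C : ℝ, ∀ j i l, |X j i l| ≤ C) →
    Tendsto (fun j => ⨅ i, (hp j).isHermitian.eigenvalues i) atTop (𝓝 0) →
    Tendsto (fun j => Ψ (X j)) atTop atTop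

/-- The simplex of designs. -/
def Omega (n : ℕ) : Set (Fin n → ℝ) := {w | (∀ i, 0 ≤ w i) ∧ ∑ i, w i = 1}

/-- The moment matrix `M(w) = ∑ i, w i • A i`. -/
def Mmat {n m : ℕ} (A : Fin n → Matrix (Fin m) (Fin m) ℝ) (w : Fin n → ℝ) :
    Matrix (Fin m) (Fin m) ℝ := ∑ i, w i • A i

/-- `Range K ⊆ Range X`. -/
def RangeIncl {m k : ℕ} (K : Matrix (Fin m) (Fin k) ℝ) (X : Matrix (Fin m) (Fin m) ℝ) : Prop :=
  LinearMap.range (Matrix.toLin' K) ≤ LinearMap.range (Matrix.toLin' X)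

/-- `Φ̂(X) = inf {Ψ U | U symmetric positive definite, X - K U Kᵀ positive semidefinite}`. -/
def PhiHat {m k : ℕ} (K : Matrix (Fin m) (Fin k) ℝ) (Ψ : Matrix (Fin k) (Fin k) ℝ → ℝ)
    (X : Matrix (Fin m) (Fin m) ℝ) : ℝ :=
  sInf {y | ∃ U : Matrix (Fin k) (Fin k) ℝ, U.PosDef ∧ (X - K * U * Kᵀ).PosSemidef ∧ y = Ψ U}

/-- The optimal value `f*` of the design problem. -/
def fstar {n m k : ℕ} (A : Fin n → Matrix (Fin m) (Fin m) ℝ) (K : Matrix (Fin m) (Fin k) ℝ)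
    (Ψ : Matrix (Fin k) (Fin k) ℝ → ℝ) : ℝ :=
  sInf {y | ∃ w ∈ Omega n, RangeIncl K (Mmat A w) ∧ y = PhiHat K Ψ (Mmat A w)}

/-- `w` is an optimal solution of the design problem. -/
def IsOptimal {n m k : ℕ} (A : Fin n → Matrix (Fin m) (Fin m) ℝ) (K : Matrix (Fin m) (Fin k) ℝ)
    (Ψ : Matrix (Fin k) (Fin k) ℝ → ℝ) (w : Fin n → ℝ) : Prop :=
  w ∈ Omega n ∧ RangeIncl K (Mmat A w) ∧ PhiHat K Ψ (Mmat A w) = fstar A K Ψ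

/-- The open domain `D` of the barrier subproblem. -/
def Dset (n : ℕ) : Set (Fin (n - 1) → ℝ) := {wt | (∀ i, 0 < wt i) ∧ ∑ i, wt i < 1}

/-- `w(w̃) = (w̃₁, …, w̃_{n-1}, 1 - ∑ w̃ᵢ)`. -/
def extendW (n : ℕ) (wt : Fin (n - 1) → ℝ) : Fin n → ℝ :=
  fun i => if h : (i : ℕ) < n - 1 then wt ⟨i, h⟩ else 1 - ∑ j, wt j

/-- The log-barrier function `f_μ`. -/
def fmu {n m k : ℕ} (A : Fin n → Matrix (Fin m) (Fin m) ℝ) (K : Matrix (Fin m) (Fin k) ℝ)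
    (Ψ : Matrix (Fin k) (Fin k) ℝ → ℝ) (μ : ℝ) (wt : Fin (n - 1) → ℝ) : ℝ :=
  Ψ ((Kᵀ * (Mmat A (extendW n wt))⁻¹ * K)⁻¹)
    - μ * ∑ i, Real.log (wt i) - μ * Real.log (1 - ∑ i, wt i)

/-!
Write `C(w) = (Kᵀ M(w)⁻¹ K)⁻¹`. By the Schur complement criterion, `C(w)` is the largest `U` with
`K U Kᵀ ≤ M(w)` in the Loewner order. The barrier terms of `f_μ` are nonnegative on `D`, so the
minimality of `w̃_j = w̃(μ_j, v_j)` gives `Ψ(C(w_j)) ≤ f_{μ_j}(w̃') + v_j ⬝ (w̃_j - w̃')` for every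
`w̃' ∈ D`, and the right side tends to `Ψ(C(w(w̃')))`. Since `0 ≤ C(w_j) ≤ C(𝟙)`, a subsequence of
`C(w_j)` converges to some `U*`; the blow-up condition on `Ψ` makes `U*` positive definite, so
continuity gives `Ψ(U*) ≤ Ψ(C(w))` for every interior design `w`, and `K U* Kᵀ ≤ M(w*)` in the
limit. Convexity of `Ψ` extends the bound from interior designs to every admissible pair of the
design problem, hence `Φ̂(M(w*)) ≤ Ψ(U*) ≤ f* ≤ Φ̂(M(w*))`.
-/

open scoped MatrixOrder

namespace Matrix

theorem PosDef.of_le {ι : Type*} {A B : Matrix ι ι ℝ} (hA : A.PosDef) (hAB : A ≤ B) :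
    B.PosDef := by
  simpa using hA.add_posSemidef hAB

variable {ι κ : Type*} [Fintype ι] [Fintype κ]

theorem isClosed_setOf_posSemidef : IsClosed {M : Matrix ι ι ℝ | M.PosSemidef} := by
  have hset : {M : Matrix ι ι ℝ | M.PosSemidef} =
      {M | Mᴴ = M} ∩ ⋂ x : ι → ℝ, {M | 0 ≤ star x ⬝ᵥ M *ᵥ x} := by
    ext M
    simp [posSemidef_iff_dotProduct_mulVec, IsHermitian]
  rw [hset]
  exact (isClosed_eq continuous_id.matrix_conjTranspose continuous_id).inter <|
    isClosed_iInter fun x => isClosed_le continuous_const <|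
      continuous_const.dotProduct (continuous_id.matrix_mulVec continuous_const)

instance : OrderClosedTopology (Matrix ι ι ℝ) where
  isClosed_le' := isClosed_setOf_posSemidef.preimage (continuous_snd.sub continuous_fst)

theorem IsHermitian.exists_le_smul_one [DecidableEq ι] {M : Matrix ι ι ℝ} (hM : M.IsHermitian) :
    ∃ c : ℝ, 0 < c ∧ M ≤ c • 1 := by
  obtain ⟨c, hc⟩ := M.finite_real_spectrum.bddAbove
  refine ⟨max c 1, by positivity, ?_⟩
  rw [← Algebra.algebraMap_eq_smul_one]
  exact le_algebraMap_of_spectrum_le (fun x hx => (hc hx).trans (le_max_left c 1)) hM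

/-- The Schur complement criterion, read off the block matrix `[X, K; Kᵀ, U⁻¹]`. -/
theorem PosDef.mul_mul_transpose_le_iff [DecidableEq ι] [DecidableEq κ] {X : Matrix ι ι ℝ}
    {U : Matrix κ κ ℝ} (hX : X.PosDef) (hU : U.PosDef) (K : Matrix ι κ ℝ) :
    K * U * Kᵀ ≤ X ↔ Kᵀ * X⁻¹ * K ≤ U⁻¹ := by
  let := hX.isUnit.invertible
  let := hU.inv.isUnit.invertible
  have h₁₁ := PosDef.fromBlocks₁₁ K U⁻¹ hX
  have h₂₂ := PosDef.fromBlocks₂₂ X K hU.inv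
  rw [nonsing_inv_nonsing_inv U hU.det_pos.ne'.isUnit] at h₂₂
  simp only [conjTranspose_eq_transpose_of_trivial] at h₁₁ h₂₂
  exact h₂₂.symm.trans h₁₁

theorem PosDef.inv_le_inv_iff [DecidableEq ι] {A B : Matrix ι ι ℝ} (hA : A.PosDef)
    (hB : B.PosDef) : A⁻¹ ≤ B⁻¹ ↔ B ≤ A := by
  simpa using (hA.mul_mul_transpose_le_iff hB 1).symm

theorem mulVec_injective_of_rank_eq {m k : ℕ} {K : Matrix (Fin m) (Fin k) ℝ} (hK : K.rank = k) :
    Function.Injective K.mulVec := by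
  have hrange : Module.finrank ℝ (LinearMap.range K.mulVecLin) = k := hK
  have hker : Module.finrank ℝ (LinearMap.ker K.mulVecLin) = 0 := by
    have := LinearMap.finrank_range_add_finrank_ker K.mulVecLin
    rw [Module.finrank_fin_fun] at this
    omega
  exact LinearMap.ker_eq_bot.1 (Submodule.finrank_eq_zero.1 hker)

theorem abs_apply_le_trace {V R : Matrix ι ι ℝ} (hV : 0 ≤ V) (hVR : V ≤ R) (i l : ι) :
    |V i l| ≤ R.trace := by
  rw [nonneg_iff_posSemidef] at hV
  have hR : R.PosSemidef := by simpa using hV.add hVR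
  have hdiag : ∀ a, V a a ≤ R.trace := fun a => by
    have h₁ : 0 ≤ R a a - V a a := (le_iff.1 hVR).diag_nonneg
    have h₂ : R a a ≤ R.trace :=
      Finset.single_le_sum (f := fun b => R b b) (fun b _ => hR.diag_nonneg) (Finset.mem_univ a)
    linarith
  have hminor : V i l * V i l ≤ V i i * V l l := by
    have := (hV.submatrix ![i, l]).det_nonneg
    rw [det_fin_two] at this
    have hsym : V l i = V i l := by simpa using hV.isHermitian.apply i l
    simp only [submatrix_apply, Matrix.cons_val_zero, Matrix.cons_val_one, hsym] at this
    linarith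
  nlinarith [abs_mul_abs_self (V i l), abs_nonneg (V i l), hdiag i, hdiag l,
    hV.diag_nonneg (i := i), hV.diag_nonneg (i := l)]

theorem exists_tendsto_subseq_of_le {U : ℕ → Matrix ι ι ℝ} {R : Matrix ι ι ℝ}
    (hU : ∀ j, 0 ≤ U j) (hUR : ∀ j, U j ≤ R) :
    ∃ L, ∃ φ : ℕ → ℕ, StrictMono φ ∧ Tendsto (U ∘ φ) atTop (𝓝 L) := by
  have htr : 0 ≤ R.trace := (nonneg_iff_posSemidef.1 ((hU 0).trans (hUR 0))).trace_nonneg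
  have hball : ∀ j, U j ∈ Metric.closedBall 0 R.trace := fun j => by
    rw [mem_closedBall_zero_iff, norm_le_iff htr]
    exact fun i l => abs_apply_le_trace (hU j) (hUR j) i l
  obtain ⟨L, -, φ, hφ, hlim⟩ := tendsto_subseq_of_bounded Metric.isBounded_closedBall hball
  exact ⟨L, φ, hφ, hlim⟩

theorem tendsto_iInf_eigenvalues_of_det_eq_zero [DecidableEq ι] {U : ℕ → Matrix ι ι ℝ}
    {L : Matrix ι ι ℝ} (hU : ∀ j, (U j).PosDef) (hlim : Tendsto U atTop (𝓝 L)) (hL : L.det = 0) :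
    Tendsto (fun j => ⨅ i, (hU j).isHermitian.eigenvalues i) atTop (𝓝 0) := by
  have : Nonempty ι := by
    by_contra h
    rw [not_nonempty_iff] at h
    simp [det_isEmpty] at hL
  set c := Fintype.card ι
  have hc : c ≠ 0 := Fintype.card_ne_zero
  set e := fun j => ⨅ i, (hU j).isHermitian.eigenvalues i
  have he : ∀ j, 0 ≤ e j := fun j => le_ciInf fun i => ((hU j).eigenvalues_pos i).le
  have hpow : ∀ j, e j ^ c ≤ (U j).det := fun j => by
    rw [(hU j).isHermitian.det_eq_prod_eigenvalues]
    calc e j ^ c = ∏ _i : ι, e j := by simp [c]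
      _ ≤ ∏ i, (hU j).isHermitian.eigenvalues i :=
        Finset.prod_le_prod (fun _ _ => he j) fun i _ => ciInf_le (Finite.bddBelow_range _) i
      _ = _ := by simp
  have hroot : Tendsto (fun j => (U j).det ^ (c⁻¹ : ℝ)) atTop (𝓝 0) := by
    have := ((continuous_id.matrix_det.tendsto L).comp hlim).rpow_const
      (p := (c⁻¹ : ℝ)) (Or.inr (by positivity))
    simpa [hL, Real.zero_rpow (inv_ne_zero (Nat.cast_ne_zero.2 hc))] using this
  refine tendsto_of_tendsto_of_tendsto_of_le_of_le tendsto_const_nhds hroot he fun j => ?_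
  calc e j = (e j ^ c) ^ (c⁻¹ : ℝ) := (Real.pow_rpow_inv_natCast (he j) hc).symm
    _ ≤ (U j).det ^ (c⁻¹ : ℝ) := Real.rpow_le_rpow (pow_nonneg (he j) c) (hpow j) (by positivity)

end Matrix

section RangeIncl

variable {m k : ℕ} {K : Matrix (Fin m) (Fin k) ℝ} {X : Matrix (Fin m) (Fin m) ℝ}

theorem RangeIncl.exists_mul_eq (h : RangeIncl K X) :
    ∃ B : Matrix (Fin m) (Fin k) ℝ, X * B = K := by
  choose b hb using fun j => h ⟨Pi.single j 1, rfl⟩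
  refine ⟨(of b)ᵀ, ?_⟩
  ext i j
  simpa [Matrix.mul_apply, mulVec, dotProduct, Pi.single_apply] using congrFun (hb j) i

theorem RangeIncl.exists_posDef_mul_mul_transpose_le (h : RangeIncl K X) (hX : 0 ≤ X) :
    ∃ U : Matrix (Fin k) (Fin k) ℝ, U.PosDef ∧ K * U * Kᵀ ≤ X := by
  obtain ⟨B, rfl⟩ := h.exists_mul_eq
  set s := CFC.sqrt X
  have hs : star s = s := (CFC.sqrt_nonneg X).isSelfAdjoint
  have hsT : sᵀ = s := hs
  have hss : s * s = X := CFC.sqrt_mul_sqrt_self X hX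
  obtain ⟨c, hc, hBc⟩ := (posSemidef_self_mul_conjTranspose (s * B)).isHermitian.exists_le_smul_one
  refine ⟨c⁻¹ • 1, PosDef.one.smul (inv_pos.2 hc), ?_⟩
  have hKK : X * B * (X * B)ᵀ ≤ c • X :=
    calc X * B * (X * B)ᵀ = star s * ((s * B) * (s * B)ᴴ) * s := by
          rw [hs, ← hss]
          simp only [conjTranspose_eq_transpose_of_trivial, transpose_mul, hsT, Matrix.mul_assoc]
      _ ≤ star s * (c • 1) * s := star_left_conjugate_le_conjugate hBc s
      _ = c • X := by rw [hs, Matrix.mul_smul, Matrix.mul_one, Matrix.smul_mul, hss]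
  calc X * B * (c⁻¹ • (1 : Matrix (Fin k) (Fin k) ℝ)) * (X * B)ᵀ = c⁻¹ • (X * B * (X * B)ᵀ) := by
        rw [Matrix.mul_smul, Matrix.mul_one, Matrix.smul_mul]
    _ ≤ c⁻¹ • (c • X) := smul_le_smul_of_nonneg_left hKK (by positivity)
    _ = X := by rw [smul_smul, inv_mul_cancel₀ hc.ne', one_smul]

theorem transpose_mulVec_eq_zero_of_mul_mul_transpose_le {U : Matrix (Fin k) (Fin k) ℝ}
    (hU : U.PosDef) (hle : K * U * Kᵀ ≤ X) {q : Fin m → ℝ} (hq : X *ᵥ q = 0) : Kᵀ *ᵥ q = 0 := by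
  by_contra hne
  have hpos := hU.dotProduct_mulVec_pos hne
  have hnonneg := (le_iff.1 hle).dotProduct_mulVec_nonneg q
  rw [sub_mulVec, hq, ← mulVec_mulVec, ← mulVec_mulVec, dotProduct_sub, dotProduct_zero,
    dotProduct_mulVec, ← mulVec_transpose] at hnonneg
  simp only [star_trivial] at hpos hnonneg
  linarith

theorem rangeIncl_of_forall_mulVec_eq_zero (hX : X.IsHermitian)
    (h : ∀ q, X *ᵥ q = 0 → Kᵀ *ᵥ q = 0) : RangeIncl K X := by
  -- split `K y` along `range X ⊕ ker X`: its kernel part `q` is orthogonal to itself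
  have hXsymm : ∀ u v : Fin m → ℝ, u ⬝ᵥ X *ᵥ v = (X *ᵥ u) ⬝ᵥ v := fun u v => by
    rw [dotProduct_mulVec, ← mulVec_transpose, show Xᵀ = X from hX]
  have hdisj : Disjoint (LinearMap.range (toLin' X)) (LinearMap.ker (toLin' X)) := by
    rw [Submodule.disjoint_def]
    rintro _ ⟨z, rfl⟩ hz
    rw [LinearMap.mem_ker, toLin'_apply] at hz
    rw [toLin'_apply] at hz ⊢
    apply dotProduct_self_eq_zero.1
    rw [← hXsymm, hz, dotProduct_zero]
  have htop := Submodule.eq_top_of_disjoint _ _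
    (by rw [LinearMap.finrank_range_add_finrank_ker]) hdisj
  rintro _ ⟨y, rfl⟩
  obtain ⟨_, ⟨z, rfl⟩, q, hq, hrq⟩ := Submodule.mem_sup.1 (htop ▸ Submodule.mem_top :
    toLin' K y ∈ LinearMap.range (toLin' X) ⊔ LinearMap.ker (toLin' X))
  rw [LinearMap.mem_ker, toLin'_apply] at hq
  have hq0 : q = 0 := by
    apply dotProduct_self_eq_zero.1
    have hKy : q ⬝ᵥ toLin' K y = 0 := by
      rw [toLin'_apply, dotProduct_mulVec, ← mulVec_transpose, h q hq, zero_dotProduct]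
    rw [← hrq, dotProduct_add, toLin'_apply, hXsymm, hq, zero_dotProduct, zero_add] at hKy
    exact hKy
  rw [← hrq, hq0, add_zero]
  exact ⟨z, rfl⟩

theorem rangeIncl_of_mul_mul_transpose_le (hX : X.IsHermitian) {U : Matrix (Fin k) (Fin k) ℝ}
    (hU : U.PosDef) (hle : K * U * Kᵀ ≤ X) : RangeIncl K X :=
  rangeIncl_of_forall_mulVec_eq_zero hX fun _ =>
    transpose_mulVec_eq_zero_of_mul_mul_transpose_le hU hle

end RangeIncl

section InfoMatrix

variable {ι κ : Type*} [Fintype ι] [DecidableEq ι] [Fintype κ] [DecidableEq κ]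

/-- The information matrix of optimal design: by `le_infoMatrix_iff`, the largest `U` with
`K U Kᵀ ≤ X`. -/
def infoMatrix (K : Matrix ι κ ℝ) (X : Matrix ι ι ℝ) : Matrix κ κ ℝ := (Kᵀ * X⁻¹ * K)⁻¹

variable {K : Matrix ι κ ℝ} {X Y : Matrix ι ι ℝ}

theorem infoMatrix_posDef (hK : Function.Injective K.mulVec) (hX : X.PosDef) :
    (infoMatrix K X).PosDef := by
  rw [infoMatrix, posDef_inv_iff]
  simpa using hX.inv.conjTranspose_mul_mul_same hK

theorem le_infoMatrix_iff (hK : Function.Injective K.mulVec) (hX : X.PosDef)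
    {U : Matrix κ κ ℝ} (hU : U.PosDef) : K * U * Kᵀ ≤ X ↔ U ≤ infoMatrix K X := by
  have hS : (Kᵀ * X⁻¹ * K).PosDef := by simpa using hX.inv.conjTranspose_mul_mul_same hK
  rw [hX.mul_mul_transpose_le_iff hU, ← hU.inv.inv_le_inv_iff hS,
    nonsing_inv_nonsing_inv U hU.det_pos.ne'.isUnit, infoMatrix]

theorem mul_infoMatrix_mul_transpose_le (hK : Function.Injective K.mulVec) (hX : X.PosDef) :
    K * infoMatrix K X * Kᵀ ≤ X :=
  (le_infoMatrix_iff hK hX (infoMatrix_posDef hK hX)).2 le_rfl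

theorem infoMatrix_mono (hK : Function.Injective K.mulVec) (hX : X.PosDef) (hY : Y.PosDef)
    (hXY : X ≤ Y) : infoMatrix K X ≤ infoMatrix K Y :=
  (le_infoMatrix_iff hK hY (infoMatrix_posDef hK hX)).1
    ((mul_infoMatrix_mul_transpose_le hK hX).trans hXY)

end InfoMatrix

section Design

variable {n m : ℕ} {A : Fin n → Matrix (Fin m) (Fin m) ℝ}

theorem isClosed_Omega (n : ℕ) : IsClosed (Omega n) := isClosed_stdSimplex ℝ (Fin n)

theorem pos_of_mem_Omega {w : Fin n → ℝ} (hw : w ∈ Omega n) : 0 < n :=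
  Nat.pos_of_ne_zero fun h => by subst h; simp [Omega] at hw

theorem exists_pos_mem_Omega (hn : 0 < n) : ∃ w ∈ Omega n, ∀ i, 0 < w i := by
  refine ⟨fun _ => (n : ℝ)⁻¹, ⟨fun _ => by positivity, ?_⟩, fun _ => by positivity⟩
  simp [(Nat.cast_pos.2 hn).ne']

@[simp]
theorem Mmat_add (u v : Fin n → ℝ) : Mmat A (u + v) = Mmat A u + Mmat A v := by
  simp [Mmat, add_smul, Finset.sum_add_distrib]

@[simp]
theorem Mmat_smul (c : ℝ) (w : Fin n → ℝ) : Mmat A (c • w) = c • Mmat A w := by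
  simp [Mmat, smul_smul, Finset.smul_sum]

@[simp]
theorem Mmat_sub (u v : Fin n → ℝ) : Mmat A (u - v) = Mmat A u - Mmat A v := by
  simp [Mmat, sub_smul, Finset.sum_sub_distrib]

theorem continuous_Mmat (A : Fin n → Matrix (Fin m) (Fin m) ℝ) : Continuous (Mmat A) :=
  continuous_finsetSum _ fun i _ => (continuous_apply i).smul continuous_const

theorem Mmat_nonneg (hA : ∀ i, (A i).PosSemidef) {w : Fin n → ℝ} (hw : 0 ≤ w) : 0 ≤ Mmat A w :=
  nonneg_iff_posSemidef.2 (posSemidef_sum _ fun i _ => (hA i).smul (hw i))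

theorem Mmat_mono (hA : ∀ i, (A i).PosSemidef) {v w : Fin n → ℝ} (hvw : v ≤ w) :
    Mmat A v ≤ Mmat A w := by
  rw [← sub_nonneg, ← Mmat_sub]
  exact Mmat_nonneg hA (sub_nonneg.2 hvw)

theorem Mmat_posDef (hA : ∀ i, (A i).PosSemidef) {w₀ : Fin n → ℝ} (hw₀ : w₀ ∈ Omega n)
    (hM₀ : (Mmat A w₀).PosDef) {w : Fin n → ℝ} (hw : ∀ i, 0 < w i) : (Mmat A w).PosDef := by
  have : Nonempty (Fin n) := ⟨⟨0, pos_of_mem_Omega hw₀⟩⟩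
  obtain ⟨i₀, hi₀⟩ := Finite.exists_min w
  have hle : w i₀ • w₀ ≤ w := fun i =>
    (mul_le_of_le_one_right (hw i₀).le (mem_Icc_of_mem_stdSimplex hw₀ i).2).trans (hi₀ i)
  have hM := Mmat_mono hA hle
  rw [Mmat_smul] at hM
  exact (hM₀.smul (hw i₀)).of_le hM

end Design

section Coordinates

variable {n : ℕ}

def truncW (w : Fin n → ℝ) : Fin (n - 1) → ℝ := fun i => w (Fin.castLE (Nat.sub_le n 1) i)

theorem continuous_truncW : Continuous (truncW (n := n)) :=
  continuous_pi fun _ => continuous_apply _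

theorem sum_eq_sum_truncW_add (hn : 0 < n) (w : Fin n → ℝ) :
    ∑ i, w i = ∑ i, truncW w i + w ⟨n - 1, by omega⟩ := by
  have hd : n - 1 + 1 = n := by omega
  rw [← (finCongr hd).sum_comp, Fin.sum_univ_castSucc]
  rfl

@[simp]
theorem truncW_extendW (wt : Fin (n - 1) → ℝ) : truncW (extendW n wt) = wt := by
  funext i
  simp [truncW, extendW]

theorem sum_extendW (hn : 0 < n) (wt : Fin (n - 1) → ℝ) : ∑ i, extendW n wt i = 1 := by
  rw [sum_eq_sum_truncW_add hn, truncW_extendW]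
  simp [extendW]

theorem extendW_pos {wt : Fin (n - 1) → ℝ} (hwt : wt ∈ Dset n) (i : Fin n) :
    0 < extendW n wt i := by
  unfold extendW
  split
  · exact hwt.1 _
  · linarith [hwt.2]

theorem extendW_mem_Omega (hn : 0 < n) {wt : Fin (n - 1) → ℝ} (hwt : wt ∈ Dset n) :
    extendW n wt ∈ Omega n :=
  ⟨fun i => (extendW_pos hwt i).le, sum_extendW hn wt⟩

theorem extendW_truncW (hn : 0 < n) {w : Fin n → ℝ} (hw : ∑ i, w i = 1) :
    extendW n (truncW w) = w := by
  funext i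
  unfold extendW
  split
  · rfl
  · have hi : i = ⟨n - 1, by omega⟩ := Fin.ext (show (i : ℕ) = n - 1 by omega)
    rw [sum_eq_sum_truncW_add hn] at hw
    rw [hi]
    linarith

theorem truncW_mem_Dset (hn : 0 < n) {w : Fin n → ℝ} (hw : ∀ i, 0 < w i)
    (hsum : ∑ i, w i = 1) : truncW w ∈ Dset n := by
  refine ⟨fun i => hw _, ?_⟩
  rw [sum_eq_sum_truncW_add hn] at hsum
  linarith [hw ⟨n - 1, by omega⟩]

end Coordinates

namespace Assumption1

variable {k : ℕ} {Ψ : Matrix (Fin k) (Fin k) ℝ → ℝ}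

theorem posDef_of_tendsto (hΨ : Assumption1 k Ψ) {U : ℕ → Matrix (Fin k) (Fin k) ℝ}
    {L : Matrix (Fin k) (Fin k) ℝ} (hU : ∀ j, (U j).PosDef) (hlim : Tendsto U atTop (𝓝 L))
    (hbdd : BddAbove (Set.range fun j => Ψ (U j))) : L.PosDef := by
  have hL : L.PosSemidef :=
    nonneg_iff_posSemidef.1 (ge_of_tendsto' hlim fun j => nonneg_iff_posSemidef.2 (hU j).posSemidef)
  rw [hL.posDef_iff_det_ne_zero]
  intro hdet
  obtain ⟨C, hC⟩ := isBounded_iff_forall_norm_le.1 (Metric.isBounded_range_of_tendsto U hlim)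
  have hblow := hΨ.blowup U hU
    ⟨C, fun j i l => (norm_entry_le_entrywise_sup_norm (U j)).trans (hC _ ⟨j, rfl⟩)⟩
    (tendsto_iInf_eigenvalues_of_det_eq_zero hU hlim hdet)
  obtain ⟨c, hc⟩ := hbdd
  obtain ⟨j, hj⟩ := (hblow.eventually_gt_atTop c).exists
  exact hj.not_ge (hc ⟨j, rfl⟩)

theorem exists_tendsto_subseq (hΨ : Assumption1 k Ψ) {U : ℕ → Matrix (Fin k) (Fin k) ℝ}
    {R : Matrix (Fin k) (Fin k) ℝ} (hU : ∀ j, (U j).PosDef) (hUR : ∀ j, U j ≤ R)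
    {ι : Type*} [Nonempty ι] {g : ι → ℝ} {r : ι → ℕ → ℝ}
    (hr : ∀ i, Tendsto (r i) atTop (𝓝 (g i))) (hΨr : ∀ i j, Ψ (U j) ≤ r i j) :
    ∃ L, ∃ φ : ℕ → ℕ, L.PosDef ∧ StrictMono φ ∧ Tendsto (U ∘ φ) atTop (𝓝 L) ∧
      ∀ i, Ψ L ≤ g i := by
  obtain ⟨L, φ, hφ, hlim⟩ := exists_tendsto_subseq_of_le
    (fun j => nonneg_iff_posSemidef.2 (hU j).posSemidef) hUR
  have hrφ : ∀ i, Tendsto (r i ∘ φ) atTop (𝓝 (g i)) := fun i => (hr i).comp hφ.tendsto_atTop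
  obtain ⟨i₀⟩ := ‹Nonempty ι›
  obtain ⟨c, hc⟩ := (hrφ i₀).bddAbove_range
  have hL : L.PosDef := hΨ.posDef_of_tendsto (fun j => hU (φ j)) hlim
    ⟨c, Set.forall_mem_range.2 fun j => (hΨr i₀ (φ j)).trans (hc ⟨j, rfl⟩)⟩
  have hΨlim : Tendsto (fun j => Ψ (U (φ j))) atTop (𝓝 (Ψ L)) :=
    (hΨ.smooth.continuousOn L hL).tendsto.comp
      (tendsto_nhdsWithin_iff.2 ⟨hlim, .of_forall fun j => hU (φ j)⟩)
  exact ⟨L, φ, hL, hφ, hlim, fun i =>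
    le_of_tendsto_of_tendsto' hΨlim (hrφ i) fun j => hΨr i (φ j)⟩

end Assumption1

section CentralPath

variable {n m k : ℕ} {A : Fin n → Matrix (Fin m) (Fin m) ℝ} {K : Matrix (Fin m) (Fin k) ℝ}
  {Ψ : Matrix (Fin k) (Fin k) ℝ → ℝ}

theorem le_fmu {μ : ℝ} (hμ : 0 ≤ μ) {wt : Fin (n - 1) → ℝ} (hwt : wt ∈ Dset n) :
    Ψ (infoMatrix K (Mmat A (extendW n wt))) ≤ fmu A K Ψ μ wt := by
  have hlog : ∑ i, Real.log (wt i) ≤ 0 := Finset.sum_nonpos fun i _ =>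
    Real.log_nonpos (hwt.1 i).le <|
      (Finset.single_le_sum (fun j _ => (hwt.1 j).le) (Finset.mem_univ i)).trans hwt.2.le
  have hsum : 0 ≤ ∑ i, wt i := Finset.sum_nonneg fun i _ => (hwt.1 i).le
  have hlog' : Real.log (1 - ∑ i, wt i) ≤ 0 :=
    Real.log_nonpos (by linarith [hwt.2]) (by linarith)
  unfold fmu infoMatrix
  nlinarith [mul_nonneg hμ (neg_nonneg.2 hlog), mul_nonneg hμ (neg_nonneg.2 hlog')]

theorem le_fmu_add_of_forall_le {μ : ℝ} (hμ : 0 ≤ μ) {v wt w' : Fin (n - 1) → ℝ}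
    (hwt : wt ∈ Dset n)
    (hmin : ∀ w' ∈ Dset n, fmu A K Ψ μ wt - ∑ i, v i * wt i ≤ fmu A K Ψ μ w' - ∑ i, v i * w' i)
    (hw' : w' ∈ Dset n) :
    Ψ (infoMatrix K (Mmat A (extendW n wt))) ≤ fmu A K Ψ μ w' + ∑ i, v i * (wt i - w' i) := by
  have := hmin w' hw'
  have := le_fmu (A := A) (K := K) (Ψ := Ψ) hμ hwt
  simp only [mul_sub, Finset.sum_sub_distrib]
  linarith

theorem tendsto_fmu_add {μs : ℕ → ℝ} {vs wt : ℕ → Fin (n - 1) → ℝ} {x : Fin (n - 1) → ℝ}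
    (hμ : Tendsto μs atTop (𝓝 0)) (hv : Tendsto vs atTop (𝓝 0)) (hwt : Tendsto wt atTop (𝓝 x))
    (w' : Fin (n - 1) → ℝ) :
    Tendsto (fun j => fmu A K Ψ (μs j) w' + ∑ i, vs j i * (wt j i - w' i)) atTop
      (𝓝 (Ψ (infoMatrix K (Mmat A (extendW n w'))))) := by
  have hcont : Continuous fun p : ℝ × (Fin (n - 1) → ℝ) × (Fin (n - 1) → ℝ) =>
      fmu A K Ψ p.1 w' + ∑ i, p.2.1 i * (p.2.2 i - w' i) := by
    unfold fmu
    fun_prop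
  simpa [Function.comp_def, fmu, infoMatrix] using
    (hcont.tendsto (0, 0, x)).comp (hμ.prodMk_nhds (hv.prodMk_nhds hwt))

theorem exists_posDef_of_centralPath (hA : ∀ i, (A i).PosSemidef) (hn : 0 < n)
    (hpos : ∀ w : Fin n → ℝ, (∀ i, 0 < w i) → (Mmat A w).PosDef)
    (hK : Function.Injective K.mulVec) (hΨ : Assumption1 k Ψ)
    {μs : ℕ → ℝ} {vs wt : ℕ → Fin (n - 1) → ℝ} (hμs : ∀ j, 0 ≤ μs j)
    (hmin : ∀ j, wt j ∈ Dset n ∧ ∀ w' ∈ Dset n,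
      fmu A K Ψ (μs j) (wt j) - ∑ i, vs j i * wt j i ≤ fmu A K Ψ (μs j) w' - ∑ i, vs j i * w' i)
    (hμ : Tendsto μs atTop (𝓝 0)) (hv : Tendsto vs atTop (𝓝 0)) {wstar : Fin n → ℝ}
    (hconv : Tendsto (fun j => extendW n (wt j)) atTop (𝓝 wstar)) :
    ∃ U : Matrix (Fin k) (Fin k) ℝ, U.PosDef ∧ K * U * Kᵀ ≤ Mmat A wstar ∧
      ∀ w ∈ Omega n, (∀ i, 0 < w i) → Ψ U ≤ Ψ (infoMatrix K (Mmat A w)) := by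
  have hM : ∀ j, (Mmat A (extendW n (wt j))).PosDef := fun j => hpos _ (extendW_pos (hmin j).1)
  have hUR : ∀ j, infoMatrix K (Mmat A (extendW n (wt j))) ≤ infoMatrix K (Mmat A 1) :=
    fun j => infoMatrix_mono hK (hM j) (hpos 1 fun _ => one_pos) <| Mmat_mono hA fun i =>
      (mem_Icc_of_mem_stdSimplex (extendW_mem_Omega hn (hmin j).1) i).2
  have hwt : Tendsto wt atTop (𝓝 (truncW wstar)) := by
    simpa [Function.comp_def] using (continuous_truncW.tendsto wstar).comp hconv
  have : Nonempty (Dset n) := ⟨⟨wt 0, (hmin 0).1⟩⟩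
  obtain ⟨U, φ, hU, hφ, hlim, hUle⟩ := hΨ.exists_tendsto_subseq
    (fun j => infoMatrix_posDef hK (hM j)) hUR (fun w' : Dset n => tendsto_fmu_add hμ hv hwt w')
    (fun w' j => le_fmu_add_of_forall_le (hμs j) (hmin j).1 (hmin j).2 w'.2)
  refine ⟨U, hU, ?_, fun w hw hwpos => ?_⟩
  · have hKK : Continuous fun V : Matrix (Fin k) (Fin k) ℝ => K * V * Kᵀ := by fun_prop
    exact le_of_tendsto_of_tendsto' ((hKK.tendsto U).comp hlim)
      (((continuous_Mmat A).tendsto wstar).comp (hconv.comp hφ.tendsto_atTop))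
      fun j => mul_infoMatrix_mul_transpose_le hK (hM (φ j))
  · simpa [extendW_truncW hn hw.2] using hUle ⟨truncW w, truncW_mem_Dset hn hwpos hw.2⟩

end CentralPath

theorem le_of_forall_le_add_mul {a b d : ℝ} (h : ∀ t, 0 < t → t < 1 → a ≤ b + t * d) : a ≤ b := by
  have hlim : Tendsto (fun t => b + t * d) (𝓝[>] 0) (𝓝 b) := by
    have : Tendsto (fun t => b + t * d) (𝓝 0) (𝓝 (b + 0 * d)) :=
      (continuous_const.add (continuous_id.mul continuous_const)).tendsto 0
    simpa using this.mono_left nhdsWithin_le_nhds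
  exact ge_of_tendsto hlim <| by
    filter_upwards [Ioo_mem_nhdsGT one_pos] with t ht using h t ht.1 ht.2

section Optimality

variable {n m k : ℕ} {A : Fin n → Matrix (Fin m) (Fin m) ℝ} {K : Matrix (Fin m) (Fin k) ℝ}
  {Ψ : Matrix (Fin k) (Fin k) ℝ → ℝ}

theorem le_PhiHat {X : Matrix (Fin m) (Fin m) ℝ} (hX : 0 ≤ X) (hR : RangeIncl K X) {c : ℝ}
    (hc : ∀ U : Matrix (Fin k) (Fin k) ℝ, U.PosDef → K * U * Kᵀ ≤ X → c ≤ Ψ U) :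
    c ≤ PhiHat K Ψ X := by
  obtain ⟨U, hU, hle⟩ := hR.exists_posDef_mul_mul_transpose_le hX
  exact le_csInf ⟨_, U, hU, hle, rfl⟩ fun _ ⟨U', hU', hle', hy⟩ => hy ▸ hc U' hU' hle'

theorem PhiHat_le {X : Matrix (Fin m) (Fin m) ℝ} {c : ℝ}
    (hc : ∀ U : Matrix (Fin k) (Fin k) ℝ, U.PosDef → c ≤ Ψ U) {U : Matrix (Fin k) (Fin k) ℝ}
    (hU : U.PosDef) (hle : K * U * Kᵀ ≤ X) : PhiHat K Ψ X ≤ Ψ U :=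
  csInf_le ⟨c, fun _ ⟨U', hU', _, hy⟩ => hy ▸ hc U' hU'⟩ ⟨U, hU, hle, rfl⟩

/-- Move `(w', U')` along a segment towards an interior design: convexity of `Ψ` bounds the error
by a multiple of the step length. -/
theorem Assumption1.le_of_mul_mul_transpose_le (hΨ : Assumption1 k Ψ)
    (hpos : ∀ w : Fin n → ℝ, (∀ i, 0 < w i) → (Mmat A w).PosDef)
    (hK : Function.Injective K.mulVec) {U : Matrix (Fin k) (Fin k) ℝ}
    (hmin : ∀ w ∈ Omega n, (∀ i, 0 < w i) → Ψ U ≤ Ψ (infoMatrix K (Mmat A w)))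
    {w' : Fin n → ℝ} (hw' : w' ∈ Omega n) {U' : Matrix (Fin k) (Fin k) ℝ} (hU' : U'.PosDef)
    (hle : K * U' * Kᵀ ≤ Mmat A w') : Ψ U ≤ Ψ U' := by
  obtain ⟨wc, hwc, hwc_pos⟩ := exists_pos_mem_Omega (pos_of_mem_Omega hw')
  have hMc := hpos wc hwc_pos
  set Uc := infoMatrix K (Mmat A wc)
  have hUc : Uc.PosDef := infoMatrix_posDef hK hMc
  refine le_of_forall_le_add_mul (d := Ψ Uc - Ψ U') fun t ht0 ht1 => ?_
  set wt := (1 - t) • w' + t • wc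
  have hwt : wt ∈ Omega n := convex_stdSimplex ℝ (Fin n) hw' hwc (by linarith) ht0.le (by ring)
  have hwt_pos : ∀ i, 0 < wt i := fun i => by
    have := mul_nonneg (sub_nonneg.2 ht1.le) (hw'.1 i)
    have := mul_pos ht0 (hwc_pos i)
    simp only [wt, Pi.add_apply, Pi.smul_apply, smul_eq_mul]
    linarith
  have hMt := hpos wt hwt_pos
  set V := (1 - t) • U' + t • Uc
  have hV : V.PosDef :=
    PosDef.posSemidef_add (hU'.posSemidef.smul (sub_nonneg.2 ht1.le)) (hUc.smul ht0)
  have hVle : K * V * Kᵀ ≤ Mmat A wt := by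
    have hKV : K * V * Kᵀ = (1 - t) • (K * U' * Kᵀ) + t • (K * Uc * Kᵀ) := by
      simp only [V, Matrix.mul_add, Matrix.add_mul, Matrix.mul_smul, Matrix.smul_mul]
    rw [hKV, Mmat_add, Mmat_smul, Mmat_smul]
    exact add_le_add (smul_le_smul_of_nonneg_left hle (sub_nonneg.2 ht1.le))
      (smul_le_smul_of_nonneg_left (mul_infoMatrix_mul_transpose_le hK hMc) ht0.le)
  calc Ψ U ≤ Ψ (infoMatrix K (Mmat A wt)) := hmin wt hwt hwt_pos
    _ ≤ Ψ V := hΨ.decreasing _ _ (infoMatrix_posDef hK hMt).isHermitian hV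
        ((le_infoMatrix_iff hK hMt hV).1 hVle)
    _ ≤ (1 - t) * Ψ U' + t * Ψ Uc := by
        simpa using hΨ.convex U' Uc hU' hUc (1 - t) (by linarith) (by linarith)
    _ = Ψ U' + t * (Ψ Uc - Ψ U') := by ring

theorem isOptimal_of_forall_le (hA : ∀ i, (A i).PosSemidef)
    (hpos : ∀ w : Fin n → ℝ, (∀ i, 0 < w i) → (Mmat A w).PosDef)
    (hK : Function.Injective K.mulVec) (hΨ : Assumption1 k Ψ) {w : Fin n → ℝ} (hw : w ∈ Omega n)
    {U : Matrix (Fin k) (Fin k) ℝ} (hU : U.PosDef) (hUw : K * U * Kᵀ ≤ Mmat A w)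
    (hmin : ∀ w' ∈ Omega n, (∀ i, 0 < w' i) → Ψ U ≤ Ψ (infoMatrix K (Mmat A w'))) :
    IsOptimal A K Ψ w := by
  obtain ⟨c, hc⟩ := hΨ.bddBelow
  have hM : ∀ w' ∈ Omega n, 0 ≤ Mmat A w' := fun w' hw' => Mmat_nonneg hA hw'.1
  have hrange : RangeIncl K (Mmat A w) :=
    rangeIncl_of_mul_mul_transpose_le (nonneg_iff_posSemidef.1 (hM w hw)).isHermitian hU hUw
  refine ⟨hw, hrange, le_antisymm ((PhiHat_le hc hU hUw).trans ?_) ?_⟩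
  · refine le_csInf ⟨_, w, hw, hrange, rfl⟩ fun _ ⟨w', hw', hR', hy⟩ => hy ▸ ?_
    exact le_PhiHat (hM w' hw') hR' fun U' hU' hle' =>
      hΨ.le_of_mul_mul_transpose_le hpos hK hmin hw' hU' hle'
  · refine csInf_le ⟨c, fun _ ⟨w', hw', hR', hy⟩ => hy ▸ ?_⟩ ⟨w, hw, hrange, rfl⟩
    exact le_PhiHat (hM w' hw') hR' fun U' hU' _ => hc U' hU'

end Optimality

theorem central_path_limit_optimal_general (n m k : ℕ)
    (A : Fin n → Matrix (Fin m) (Fin m) ℝ) (hA : ∀ i, (A i).PosSemidef)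
    (hex : ∃ w ∈ Omega n, (Mmat A w).PosDef)
    (K : Matrix (Fin m) (Fin k) ℝ) (hK : K.rank = k)
    (Ψ : Matrix (Fin k) (Fin k) ℝ → ℝ)
    (hΨ : Assumption1 k Ψ)
    (wfun : ℝ → (Fin (n - 1) → ℝ) → Fin (n - 1) → ℝ)
    (hwfun : ∀ μ : ℝ, 0 < μ → ∀ v : Fin (n - 1) → ℝ, wfun μ v ∈ Dset n ∧
      ∀ wt' ∈ Dset n, fmu A K Ψ μ (wfun μ v) - ∑ i, v i * wfun μ v i ≤
        fmu A K Ψ μ wt' - ∑ i, v i * wt' i)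
    (μs : ℕ → ℝ) (hμpos : ∀ j, 0 < μs j) (hμ0 : Tendsto μs atTop (𝓝 0))
    (vs : ℕ → Fin (n - 1) → ℝ) (hv0 : Tendsto vs atTop (𝓝 0))
    (wstar : Fin n → ℝ)
    (hconv : Tendsto (fun j => extendW n (wfun (μs j) (vs j))) atTop (𝓝 wstar)) :
    wstar ∈ Omega n ∧ RangeIncl K (Mmat A wstar) ∧
      PhiHat K Ψ (Mmat A wstar) = fstar A K Ψ := by
  obtain ⟨w₀, hw₀, hM₀⟩ := hex
  have hn := pos_of_mem_Omega hw₀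
  have hpos : ∀ w : Fin n → ℝ, (∀ i, 0 < w i) → (Mmat A w).PosDef :=
    fun _ => Mmat_posDef hA hw₀ hM₀
  have hKinj := mulVec_injective_of_rank_eq hK
  have hmin := fun j => hwfun (μs j) (hμpos j) (vs j)
  have hwstar : wstar ∈ Omega n := (isClosed_Omega n).mem_of_tendsto hconv
    (.of_forall fun j => extendW_mem_Omega hn (hmin j).1)
  obtain ⟨U, hU, hUw, hUmin⟩ := exists_posDef_of_centralPath hA hn hpos hKinj hΨ
    (fun j => (hμpos j).le) hmin hμ0 hv0 hconv
  exact isOptimal_of_forall_le hA hpos hKinj hΨ hwstar hU hUw hUmin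

/-- Any limit of central-path points `w(μ_j, v_j)` with `μ_j → 0`, `v_j → 0` is an optimal
solution of the design problem. -/
theorem central_path_limit_optimal (n m k : ℕ) (hn : 2 ≤ n) (hm : 1 ≤ m) (hk : 1 ≤ k) (hkm : k ≤ m)
    (A : Fin n → Matrix (Fin m) (Fin m) ℝ) (hA : ∀ i, (A i).PosSemidef)
    (hex : ∃ w ∈ Omega n, (Mmat A w).PosDef)
    (K : Matrix (Fin m) (Fin k) ℝ) (hK : K.rank = k)
    (Ψ : Matrix (Fin k) (Fin k) ℝ → ℝ)
    (hΨ : Assumption1 k Ψ)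
    (wfun : ℝ → (Fin (n - 1) → ℝ) → Fin (n - 1) → ℝ)
    (hwfun : ∀ μ : ℝ, 0 < μ → ∀ v : Fin (n - 1) → ℝ, wfun μ v ∈ Dset n ∧
      ∀ wt' ∈ Dset n, fmu A K Ψ μ (wfun μ v) - ∑ i, v i * wfun μ v i ≤
        fmu A K Ψ μ wt' - ∑ i, v i * wt' i)
    (μs : ℕ → ℝ) (hμpos : ∀ j, 0 < μs j) (hμ0 : Tendsto μs atTop (𝓝 0))
    (vs : ℕ → Fin (n - 1) → ℝ) (hv0 : Tendsto vs atTop (𝓝 0))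
    (wstar : Fin n → ℝ)
    (hconv : Tendsto (fun j => extendW n (wfun (μs j) (vs j))) atTop (𝓝 wstar)) :
    wstar ∈ Omega n ∧ RangeIncl K (Mmat A wstar) ∧
      PhiHat K Ψ (Mmat A wstar) = fstar A K Ψ :=
  central_path_limit_optimal_general n m k A hA hex K hK Ψ hΨ wfun hwfun μs hμpos hμ0 vs hv0 wstar
    hconv
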